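/- The base observer O_Base supports elision condition (i): for all histories h1, h2 and addresses a, b, c with a ≠ c ≠ b and h2 = h1[a/b], the allowed behavior on c coincides: F_{h1}(c) = F_{h2}(c). -/

import Mathlib

/-- Events relevant for the base observer: retires, frees, and other events. -/
inductive Ev (Thread Adr : Type*) where
  | retire (t : Thread) (a : Adr)
  | free (a : Adr)
  | other

variable {Thread Adr : Type*}

/-- The locations of the base observer `O_Base`. -/
inductive BaseLoc where
  | init | retired | final
deriving DecidableEq

/-- The (deterministic, with implicit self-loops) transition function of
`O_Base`, parameterized by the observed address `v`:
from `init`, `retire(_, v)` goes to `retired` and `free(v)` goes to the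
accepting location `final`; from `retired`, `free(v)` goes back to `init`;
`final` is trapping; all other events are self-loops. -/
def baseStep [DecidableEq Adr] (v : Adr) : BaseLoc → Ev Thread Adr → BaseLoc
  | .init, .retire _ a => if a = v then .retired else .init
  | .init, .free a => if a = v then .final else .init
  | .retired, .free a => if a = v then .init else .retired
  | .final, _ => .final
  | l, _ => l

/-- The specification of `O_Base`: histories accepted by no instantiation of
the observed address `v`, i.e., no run from the initial location reaches the
accepting location. -/
def specBase [DecidableEq Adr] (h : List (Ev Thread Adr)) : Prop :=
  ∀ v : Adr, h.foldl (baseStep v) BaseLoc.init ≠ BaseLoc.final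


/-- Every free-event of `h` targets only address `c`. -/
def FreesOnly (c : Adr) (h : List (Ev Thread Adr)) : Prop :=
  ∀ e ∈ h, ∀ b, e = Ev.free b → b = c

/-- The behavior allowed by `O_Base` on address `c` after history `h`:
`F_h(c) := { h' | h.h' ∈ spec(O_Base) ∧ all free-events of h' target c }`. -/
def BehavBase [DecidableEq Adr] (h : List (Ev Thread Adr)) (c : Adr) :
    Set (List (Ev Thread Adr)) :=
  { h' | specBase (h ++ h') ∧ FreesOnly c h' }

/-- Swap addresses `a` and `b`. -/
def swapAdr [DecidableEq Adr] (a b x : Adr) : Adr :=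
  if x = a then b else if x = b then a else x

/-- Replacement in an event: swap every occurrence of `a` with `b`. -/
def Ev.repl [DecidableEq Adr] (a b : Adr) : Ev Thread Adr → Ev Thread Adr
  | .retire t c => .retire t (swapAdr a b c)
  | .free c => .free (swapAdr a b c)
  | .other => .other

/-- Replacement `h[a/b]` in a history. -/
def replHist [DecidableEq Adr] (a b : Adr) (h : List (Ev Thread Adr)) :
    List (Ev Thread Adr) :=
  h.map (Ev.repl a b)

/-!
The run of `O_Base` for `v` on `h[a/b]` is its run for `swap a b v` on `h`. Take `h'` in `F_{h1}(c)`
and an observed address `v`. If `v = c`, the swap fixes `v`, so the run on `h1[a/b].h'` is the run on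
`h1.h'`, which does not accept. If `v ≠ c`, the run on `h1[a/b]` ends where the run for `swap a b v`
on `h1` does, which is not `final` because `h1.h'` is not accepted and `final` is trapping; and `h'`
frees only `c`, so from a non-final location it cannot reach `final` for `v`. The other inclusion
follows because `[a/b]` is an involution.
-/

lemma swapAdr_eq_swap [DecidableEq Adr] (a b : Adr) : swapAdr a b = Equiv.swap a b := by
  funext x
  rw [Equiv.swap_apply_def, swapAdr]

lemma Ev.repl_repl [DecidableEq Adr] (a b : Adr) (e : Ev Thread Adr) :
    (e.repl a b).repl a b = e := by
  cases e <;> simp [Ev.repl, swapAdr_eq_swap]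

lemma replHist_replHist [DecidableEq Adr] (a b : Adr) (h : List (Ev Thread Adr)) :
    replHist a b (replHist a b h) = h := by
  simp [replHist, Function.comp_def, Ev.repl_repl]

lemma baseStep_repl [DecidableEq Adr] (a b v : Adr) (l : BaseLoc) (e : Ev Thread Adr) :
    baseStep v l (e.repl a b) = baseStep (swapAdr a b v) l e := by
  have hiff : ∀ x, swapAdr a b x = v ↔ x = swapAdr a b v := by
    simp only [swapAdr_eq_swap]
    exact fun x => (Equiv.swap a b).eq_symm_apply.symm
  cases e <;> cases l <;> simp [Ev.repl, baseStep, hiff]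

lemma foldl_baseStep_replHist [DecidableEq Adr] (a b v : Adr) (h : List (Ev Thread Adr))
    (l : BaseLoc) :
    (replHist a b h).foldl (baseStep v) l = h.foldl (baseStep (swapAdr a b v)) l := by
  induction h generalizing l with
  | nil => rfl
  | cons e t ih => simp only [replHist, List.map_cons, List.foldl_cons, baseStep_repl]; exact ih _

lemma foldl_baseStep_final [DecidableEq Adr] (v : Adr) (h : List (Ev Thread Adr)) :
    h.foldl (baseStep v) BaseLoc.final = BaseLoc.final := by
  induction h with
  | nil => rfl
  | cons e t ih => exact ih

lemma baseStep_ne_final [DecidableEq Adr] {v : Adr} {l : BaseLoc} {e : Ev Thread Adr}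
    (hl : l ≠ BaseLoc.final) (he : ∀ d, e = Ev.free d → d ≠ v) :
    baseStep v l e ≠ BaseLoc.final := by
  cases e <;> cases l <;> simp_all [baseStep, ite_eq_iff]

lemma foldl_baseStep_ne_final_of_freesOnly [DecidableEq Adr] {v c : Adr} (hvc : v ≠ c)
    {h : List (Ev Thread Adr)} (hf : FreesOnly c h) {l : BaseLoc} (hl : l ≠ BaseLoc.final) :
    h.foldl (baseStep v) l ≠ BaseLoc.final := by
  induction h generalizing l with
  | nil => exact hl
  | cons e t ih =>
    refine ih (fun e' he' => hf e' (List.mem_cons_of_mem _ he')) (baseStep_ne_final hl ?_)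
    rintro d rfl rfl
    exact hvc (hf _ List.mem_cons_self _ rfl)

lemma specBase_replHist_append [DecidableEq Adr] {a b c : Adr} (hac : a ≠ c) (hbc : b ≠ c)
    {h h' : List (Ev Thread Adr)} (hspec : specBase (h ++ h')) (hf : FreesOnly c h') :
    specBase (replHist a b h ++ h') := by
  intro v
  have hrun := hspec (swapAdr a b v)
  rw [List.foldl_append] at hrun ⊢
  rw [foldl_baseStep_replHist]
  by_cases hvc : v = c
  · have hfix : swapAdr a b v = v := by
      rw [hvc, swapAdr_eq_swap, Equiv.swap_apply_of_ne_of_ne hac.symm hbc.symm]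
    rwa [hfix] at hrun ⊢
  · refine foldl_baseStep_ne_final_of_freesOnly hvc hf fun hfin => hrun ?_
    rw [hfin, foldl_baseStep_final]

/-- `O_Base` supports elision condition (i): for all histories `h1`, `h2` and
addresses `a`, `b`, `c` with `a ≠ c ≠ b` and `h2 = h1[a/b]`, the behavior
allowed on `c` coincides: `F_{h1}(c) = F_{h2}(c)`. -/
theorem specBase_elision_replace [DecidableEq Adr]
    (h1 h2 : List (Ev Thread Adr)) (a b c : Adr)
    (hac : a ≠ c) (hcb : c ≠ b) (hrepl : h2 = replHist a b h1) :
    BehavBase h1 c = BehavBase h2 c := by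
  subst hrepl
  ext h'
  constructor
  · exact fun ⟨hs, hf⟩ => ⟨specBase_replHist_append hac hcb.symm hs hf, hf⟩
  · rintro ⟨hs, hf⟩
    refine ⟨?_, hf⟩
    simpa only [replHist_replHist] using specBase_replHist_append hac hcb.symm hs hf
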